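/- Let Σ be a finite alphabet with |Σ| = 4, let ℓ, κ, q be natural numbers with q · Φ(ℓ, κ) < 4^ℓ, where Φ(ℓ, κ) = ∑_{j=0}^{κ} C(ℓ, j) · 3^j, let x_1, …, x_q ∈ Σ^ℓ be fixed strings, let X be a uniformly random element of Σ^ℓ, and let U = ⋃_{i=1}^{q} B_κ(x_i). If A is any event on the same probability space satisfying the conditional bound P(A ∩ {X ∉ U}) ≤ P(X ∉ U) · (1/(4^ℓ − q·Φ(ℓ, κ))), then P(A) ≤ (q·Φ(ℓ, κ) + 1)/4^ℓ. -/

import Mathlib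

open Finset MeasureTheory ENNReal

/-!
Split `A` according to whether `X` lands in `U`. A Hamming ball of radius `κ` has at most
`Φ(ℓ, κ)` points (choose the set of disagreeing positions, then one of the three other letters
at each), so `|U| ≤ q Φ` and `P(X ∈ U) = |U| / 4^ℓ`. The hypothesis bounds the other part by
`(4^ℓ - |U|) / (4^ℓ (4^ℓ - q Φ))`, and `(4^ℓ - |U|) / (4^ℓ - q Φ) ≤ q Φ - |U| + 1`.
-/

section HammingBall

variable {ι β : Type*} [Fintype ι] [DecidableEq ι] [Fintype β] [DecidableEq β]

/-- The strings whose set of disagreements with `x` is exactly `S`. -/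
def differOn (x : ι → β) (S : Finset ι) : Finset (ι → β) :=
  Fintype.piFinset fun i => if i ∈ S then univ.erase (x i) else {x i}

lemma card_differOn (x : ι → β) (S : Finset ι) :
    (differOn x S).card = (Fintype.card β - 1) ^ S.card := by
  simp only [differOn, Fintype.card_piFinset, apply_ite Finset.card, card_erase_of_mem (mem_univ _),
    card_univ, card_singleton]
  rw [prod_ite_mem, univ_inter, prod_const]

lemma mem_differOn_filter_ne (x y : ι → β) : y ∈ differOn x (univ.filter fun i => x i ≠ y i) := by
  simp only [differOn, Fintype.mem_piFinset]
  intro i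
  by_cases h : x i = y i <;> simp [h, eq_comm]

lemma card_filter_hammingDist_eq_le (x : ι → β) (j : ℕ) :
    (univ.filter fun y => hammingDist x y = j).card ≤
      (Fintype.card ι).choose j * (Fintype.card β - 1) ^ j := by
  calc (univ.filter fun y => hammingDist x y = j).card
      ≤ ((powersetCard j univ).biUnion (differOn x)).card := by
        refine card_le_card fun y hy => mem_biUnion.2 ⟨_, ?_, mem_differOn_filter_ne x y⟩
        rw [mem_filter] at hy
        exact mem_powersetCard.2 ⟨subset_univ _, hy.2⟩
    _ ≤ ∑ S ∈ powersetCard j univ, (differOn x S).card := card_biUnion_le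
    _ = (Fintype.card ι).choose j * (Fintype.card β - 1) ^ j := by
        rw [sum_congr rfl fun S hS => by rw [card_differOn, (mem_powersetCard.1 hS).2],
          sum_const, card_powersetCard, card_univ, smul_eq_mul]

lemma card_filter_hammingDist_le_le (x : ι → β) (κ : ℕ) :
    (univ.filter fun y => hammingDist x y ≤ κ).card ≤
      ∑ j ∈ range (κ + 1), (Fintype.card ι).choose j * (Fintype.card β - 1) ^ j := by
  calc (univ.filter fun y => hammingDist x y ≤ κ).card
      ≤ ((range (κ + 1)).biUnion fun j => univ.filter fun y => hammingDist x y = j).card := by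
        refine card_le_card fun y hy => ?_
        simp_all
    _ ≤ _ := card_biUnion_le.trans (sum_le_sum fun j _ => card_filter_hammingDist_eq_le x j)

end HammingBall

lemma measure_preimage_finset_le {Ω α : Type*} [MeasurableSpace Ω] (μ : Measure Ω)
    (X : Ω → α) {c : ℝ≥0∞} (h : ∀ y, μ (X ⁻¹' {y}) ≤ c) (S : Finset α) :
    μ (X ⁻¹' S) ≤ S.card * c := by
  calc μ (X ⁻¹' S) = μ (⋃ y ∈ S, X ⁻¹' {y}) := by simp
    _ ≤ ∑ y ∈ S, μ (X ⁻¹' {y}) := measure_biUnion_finset_le _ _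
    _ ≤ S.card * c := by simpa using sum_le_sum fun y (_ : y ∈ S) => h y

lemma ENNReal.natCast_add_sub_div_sub_le {k m N : ℕ} (hkm : k ≤ m) (hmN : m < N) :
    (k : ℝ≥0∞) + ((N - k : ℕ) : ℝ≥0∞) / ((N - m : ℕ) : ℝ≥0∞) ≤ ((m + 1 : ℕ) : ℝ≥0∞) := by
  have : ((N - k : ℕ) : ℝ≥0∞) / ((N - m : ℕ) : ℝ≥0∞) ≤ ((m - k + 1 : ℕ) : ℝ≥0∞) := by
    refine ENNReal.div_le_of_le_mul ?_
    rw [← Nat.cast_mul, Nat.cast_le]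
    obtain ⟨d, rfl⟩ := Nat.exists_eq_add_of_le hkm
    obtain ⟨t, rfl⟩ := Nat.exists_eq_add_of_lt hmN
    rw [show k + d + t + 1 - k = d + (t + 1) by omega, show k + d + t + 1 - (k + d) = t + 1 by omega,
      Nat.add_sub_cancel_left]
    nlinarith
  calc _ ≤ (k : ℝ≥0∞) + ((m - k + 1 : ℕ) : ℝ≥0∞) := add_le_add_right this _
    _ = _ := by rw [← Nat.cast_add]; congr 1; omega

theorem prediction_game_success_bound_general
    {Ω : Type*} [MeasurableSpace Ω] (μ : Measure Ω)
    (ℓ κ q : ℕ)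
    (hq : q * (∑ j ∈ Finset.range (κ + 1), Nat.choose ℓ j * 3 ^ j) < 4 ^ ℓ)
    (x : Fin q → Fin ℓ → Fin 4)
    (X : Ω → Fin ℓ → Fin 4)
    (hunif : ∀ y : Fin ℓ → Fin 4, μ (X ⁻¹' {y}) = 1 / ((4 ^ ℓ : ℕ) : ℝ≥0∞))
    (A : Set Ω)
    (hcond : μ (A ∩ X ⁻¹' {y | ∃ i : Fin q, hammingDist (x i) y ≤ κ}ᶜ) ≤
        μ (X ⁻¹' {y | ∃ i : Fin q, hammingDist (x i) y ≤ κ}ᶜ) *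
          (1 / (((4 ^ ℓ - q * ∑ j ∈ Finset.range (κ + 1),
            Nat.choose ℓ j * 3 ^ j : ℕ)) : ℝ≥0∞))) :
    μ A ≤ ((q * (∑ j ∈ Finset.range (κ + 1), Nat.choose ℓ j * 3 ^ j) + 1 : ℕ) : ℝ≥0∞) /
        ((4 ^ ℓ : ℕ) : ℝ≥0∞) := by
  set Φ := ∑ j ∈ range (κ + 1), ℓ.choose j * 3 ^ j
  set U : Finset (Fin ℓ → Fin 4) := univ.filter fun y => ∃ i, hammingDist (x i) y ≤ κ
  have hU : U.card ≤ q * Φ := by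
    calc U.card ≤ (univ.biUnion fun i => univ.filter fun y => hammingDist (x i) y ≤ κ).card :=
          card_le_card fun y hy => by simpa [U] using hy
      _ ≤ ∑ i : Fin q, Φ := card_biUnion_le.trans <| sum_le_sum fun i _ => by
          simpa using card_filter_hammingDist_le_le (x i) κ
      _ = q * Φ := by simp
  have hUc : Uᶜ.card = 4 ^ ℓ - U.card := by simp [card_compl]
  have hpre := measure_preimage_finset_le μ X fun y => (hunif y).le
  rw [← coe_filter_univ, ← coe_compl] at hcond
  calc μ A ≤ μ (A ∩ X ⁻¹' U) + μ (A ∩ X ⁻¹' ↑Uᶜ) := by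
        simpa [Set.sdiff_eq, ← Set.preimage_compl] using measure_le_inter_add_sdiff μ A (X ⁻¹' U)
    _ ≤ U.card * (1 / (4 ^ ℓ : ℕ)) + Uᶜ.card * (1 / (4 ^ ℓ : ℕ)) * (1 / (4 ^ ℓ - q * Φ : ℕ)) :=
        add_le_add ((measure_mono Set.inter_subset_right).trans (hpre U))
          (hcond.trans (mul_le_mul_left (hpre _) _))
    _ = (U.card + ((4 ^ ℓ - U.card : ℕ) : ℝ≥0∞) / (4 ^ ℓ - q * Φ : ℕ)) / (4 ^ ℓ : ℕ) := by
        rw [hUc]; simp only [div_eq_mul_inv, one_mul]; ring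
    _ ≤ _ := by gcongr; exact ENNReal.natCast_add_sub_div_sub_le hU hq

/-- The probabilistic core of the finite-domain unpredictability bound.
Let `X` be uniformly random over `Fin ℓ → Fin 4`, let `U` be the union of the Hamming
balls of radius `κ` around the fixed strings `x_1, …, x_q`, and suppose
`q · Φ(ℓ, κ) < 4^ℓ` where `Φ(ℓ, κ) = ∑_{j=0}^{κ} C(ℓ, j) · 3^j`. If an event `A`
satisfies `P(A ∩ {X ∉ U}) ≤ P(X ∉ U) · 1/(4^ℓ − q·Φ(ℓ, κ))`, then
`P(A) ≤ (q·Φ(ℓ, κ) + 1)/4^ℓ`. -/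
theorem prediction_game_success_bound
    {Ω : Type*} [MeasurableSpace Ω] (μ : Measure Ω) [IsProbabilityMeasure μ]
    (ℓ κ q : ℕ)
    (hq : q * (∑ j ∈ Finset.range (κ + 1), Nat.choose ℓ j * 3 ^ j) < 4 ^ ℓ)
    (x : Fin q → Fin ℓ → Fin 4)
    (X : Ω → Fin ℓ → Fin 4) (hX : Measurable X)
    (hunif : ∀ y : Fin ℓ → Fin 4, μ (X ⁻¹' {y}) = 1 / ((4 ^ ℓ : ℕ) : ℝ≥0∞))
    (A : Set Ω) (hA : MeasurableSet A)
    (hcond : μ (A ∩ X ⁻¹' {y | ∃ i : Fin q, hammingDist (x i) y ≤ κ}ᶜ) ≤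
        μ (X ⁻¹' {y | ∃ i : Fin q, hammingDist (x i) y ≤ κ}ᶜ) *
          (1 / (((4 ^ ℓ - q * ∑ j ∈ Finset.range (κ + 1),
            Nat.choose ℓ j * 3 ^ j : ℕ)) : ℝ≥0∞))) :
    μ A ≤ ((q * (∑ j ∈ Finset.range (κ + 1), Nat.choose ℓ j * 3 ^ j) + 1 : ℕ) : ℝ≥0∞) /
        ((4 ^ ℓ : ℕ) : ℝ≥0∞) :=
  prediction_game_success_bound_general μ ℓ κ q hq x X hunif A hcond
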